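/- arXiv:2507.11090 — 2 statements merged into one kernel-verified Lean document; each statement's English description precedes it below -/
import Mathlib

section
/- Anchoring a single edge x in a graph G increases the trussness of any other edge by at most 1; that is, for every edge e, t^{x}(e) - t(e) ≤ 1, where t^{x}(e) denotes trussness computed when x is treated as having infinite support (x is never removed during truss decomposition). -/
/-!
Let `H` be an anchored `k`-truss containing `e ≠ x`. Deleting the anchor `x` from `H` destroys
at most one triangle on any other edge `f = s(a, b)`: a common neighbour `w` of `a` and `b` is lost
only if `x = s(a, w)` or `x = s(b, w)`, and since `x ≠ f` this pins `w` down. So `H` minus `x` is an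
ordinary `(k - 1)`-truss containing `e`, whence `t^{x}(e) - 1 ≤ t(e)`.
-/

variable {V : Type*}

/-- Support of an (unordered) edge in graph `H`: number of common neighbors. -/
noncomputable def esupp [Fintype V] (H : SimpleGraph V) : Sym2 V → ℕ :=
  Sym2.lift ⟨fun u v => Nat.card {w : V // H.Adj u w ∧ H.Adj v w},
    fun _ _ => Nat.card_congr (Equiv.subtypeEquivRight fun _ => and_comm)⟩

/-- `H` is a subgraph of `G` in which every edge has support at least `k-2`. -/
def IsTrussSub [Fintype V] (G H : SimpleGraph V) (k : ℕ) : Prop :=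
  H ≤ G ∧ ∀ e ∈ H.edgeSet, k - 2 ≤ esupp H e

/-- Trussness of an edge: the largest `k` such that some subgraph witnessing
the `k`-truss support condition contains it. -/
noncomputable def etruss [Fintype V] (G : SimpleGraph V) (e : Sym2 V) : ℕ :=
  sSup {k | ∃ H, IsTrussSub G H k ∧ e ∈ H.edgeSet}

/-- The `k`-truss of `G`: the maximal subgraph in which every edge has support `≥ k-2`. -/
noncomputable def trussG [Fintype V] (G : SimpleGraph V) (k : ℕ) : SimpleGraph V :=
  sSup {H | IsTrussSub G H k}

/-- Anchored truss-subgraph: edges in the anchor set `A` are exempt from the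
support constraint. -/
def IsATrussSub [Fintype V] (G H : SimpleGraph V) (A : Set (Sym2 V)) (k : ℕ) : Prop :=
  H ≤ G ∧ ∀ e ∈ H.edgeSet, e ∈ A ∨ k - 2 ≤ esupp H e

/-- Anchored trussness `t^A(e)`. -/
noncomputable def atruss [Fintype V] (G : SimpleGraph V) (A : Set (Sym2 V)) (e : Sym2 V) : ℕ :=
  sSup {k | ∃ H, IsATrussSub G H A k ∧ e ∈ H.edgeSet}

/-- The anchored `k`-truss of `G` with anchor set `A`. -/
noncomputable def atrussGraph [Fintype V] (G : SimpleGraph V) (A : Set (Sym2 V)) (k : ℕ) :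
    SimpleGraph V :=
  sSup {H | IsATrussSub G H A k}

/-- Trussness gain: total increment of trussness over all non-anchor edges. -/
noncomputable def TG [Fintype V] (G : SimpleGraph V) (A : Set (Sym2 V)) : ℕ :=
  ∑ e ∈ (G.edgeSet \ A).toFinite.toFinset, (atruss G A e - etruss G e)

/-- `a b c` form a triangle in `G`. -/
def IsTri (G : SimpleGraph V) (a b c : V) : Prop := G.Adj a b ∧ G.Adj b c ∧ G.Adj a c

/-- The three edges of the triangle on `a b c`. -/
def triE (a b c : V) : Set (Sym2 V) := {s(a, b), s(b, c), s(a, c)}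

/-- Two edges lie in a common triangle of `G`. -/
def ShareTri (G : SimpleGraph V) (e f : Sym2 V) : Prop :=
  ∃ a b c, IsTri G a b c ∧ e ∈ triE a b c ∧ f ∈ triE a b c

/-- Triangle connectivity: chain of triangles, consecutive ones sharing an edge. -/
def TriConn (G : SimpleGraph V) : Sym2 V → Sym2 V → Prop := Relation.TransGen (ShareTri G)

/-- A `k`-truss component: a truss-subgraph whose edges are pairwise
triangle-connected within it, maximal with these properties. -/
def IsTrussComponent [Fintype V] (G S : SimpleGraph V) (k : ℕ) : Prop :=
  IsTrussSub G S k ∧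
  (∀ e ∈ S.edgeSet, ∀ f ∈ S.edgeSet, e = f ∨ TriConn S e f) ∧
  ∀ S', IsTrussSub G S' k →
    (∀ e ∈ S'.edgeSet, ∀ f ∈ S'.edgeSet, e = f ∨ TriConn S' e f) → S ≤ S' → S' = S

section Truss

variable [Fintype V]

lemma esupp_mk (H : SimpleGraph V) (a b : V) :
    esupp H s(a, b) = {w | H.Adj a w ∧ H.Adj b w}.ncard := by
  simp only [esupp, Sym2.lift_mk]
  exact Nat.card_coe_set_eq _

lemma esupp_le_card (H : SimpleGraph V) (e : Sym2 V) : esupp H e ≤ Fintype.card V := by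
  induction e using Sym2.ind with
  | _ a b => simpa only [esupp_mk] using (Set.ncard_le_card _).trans_eq Nat.card_eq_fintype_card

lemma bddAbove_trussness_set (G : SimpleGraph V) (e : Sym2 V) :
    BddAbove {k | ∃ H, IsTrussSub G H k ∧ e ∈ H.edgeSet} := by
  refine ⟨Fintype.card V + 2, ?_⟩
  rintro k ⟨H, ⟨-, hsupp⟩, heH⟩
  have := esupp_le_card H e
  have := hsupp e heH
  omega

omit [Fintype V] in
lemma eq_of_sym2_mk_eq_of_ne {a b w₁ w₂ : V} {x : Sym2 V} (hne : s(a, b) ≠ x)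
    (h₁ : s(a, w₁) = x ∨ s(b, w₁) = x) (h₂ : s(a, w₂) = x ∨ s(b, w₂) = x) : w₁ = w₂ := by
  rcases h₁ with rfl | rfl <;> rcases h₂ with h₂ | h₂ <;> grind [Sym2.eq_iff]

lemma esupp_le_esupp_deleteEdges_add_one (H : SimpleGraph V) {f x : Sym2 V} (hne : f ≠ x) :
    esupp H f ≤ esupp (H.deleteEdges {x}) f + 1 := by
  induction f using Sym2.ind with
  | _ a b =>
    rw [esupp_mk, esupp_mk]
    set lost : Set V := {w | s(a, w) = x ∨ s(b, w) = x}
    have hcover : {w | H.Adj a w ∧ H.Adj b w} ⊆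
        {w | (H.deleteEdges {x}).Adj a w ∧ (H.deleteEdges {x}).Adj b w} ∪ lost := by
      rintro w ⟨haw, hbw⟩
      by_cases hw : w ∈ lost
      · exact Or.inr hw
      · simp only [lost, Set.mem_ofPred_eq, not_or] at hw
        exact Or.inl ⟨H.deleteEdges_adj.2 ⟨haw, hw.1⟩, H.deleteEdges_adj.2 ⟨hbw, hw.2⟩⟩
    have hlost : lost.ncard ≤ 1 :=
      Set.ncard_le_one_iff_subsingleton.mpr fun _ h₁ _ h₂ => eq_of_sym2_mk_eq_of_ne hne h₁ h₂
    calc _ ≤ _ := Set.ncard_le_ncard hcover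
      _ ≤ _ := Set.ncard_union_le _ _
      _ ≤ _ := by omega

lemma IsATrussSub.isTrussSub_deleteEdges {G H : SimpleGraph V} {x : Sym2 V} {k : ℕ}
    (hH : IsATrussSub G H {x} k) : IsTrussSub G (H.deleteEdges {x}) (k - 1) := by
  obtain ⟨hHG, hsupp⟩ := hH
  refine ⟨(H.deleteEdges_le _).trans hHG, fun f hf => ?_⟩
  rw [SimpleGraph.edgeSet_deleteEdges] at hf
  have hfx : f ≠ x := hf.2
  have := (hsupp f hf.1).resolve_left hfx
  have := esupp_le_esupp_deleteEdges_add_one H hfx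
  omega

end Truss

theorem stmt4_general [Fintype V] (G : SimpleGraph V) (x e : Sym2 V)
    (hne : e ≠ x) :
    atruss G {x} e ≤ etruss G e + 1 := by
  refine csSup_le' ?_
  rintro k ⟨H, hH, heH⟩
  rw [← Nat.sub_le_iff_le_add]
  refine le_csSup (bddAbove_trussness_set G e) ⟨H.deleteEdges {x}, hH.isTrussSub_deleteEdges, ?_⟩
  rw [SimpleGraph.edgeSet_deleteEdges]
  exact ⟨heH, hne⟩

theorem stmt4 [Fintype V] (G : SimpleGraph V) (x e : Sym2 V)
    (hx : x ∈ G.edgeSet) (he : e ∈ G.edgeSet) (hne : e ≠ x) :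
    atruss G {x} e ≤ etruss G e + 1 :=
  stmt4_general G x e hne
end

section
/- Anchoring an edge x can only increase the trussness of edges with trussness at least t(x): if e is a follower of x (t^{x}(e) > t(e)), then t(e) ≥ t(x). -/
variable {V : Type*}

/-
If `t(x) > t(e)`, set `m = t(e) + 1`. Since `t^{x}(e) ≥ m`, some subgraph `H ∋ e` satisfies the
`m`-truss condition everywhere except possibly at `x`; since `t(x) ≥ m`, some subgraph `W ∋ x`
satisfies it everywhere. Supports only grow in `H ⊔ W`, and `x` already has enough support in `W`,
so `H ⊔ W` is an `m`-truss subgraph containing `e`, contradicting `t(e) < m`.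
-/

-- `sSup` of an empty or unbounded set of naturals is `0`, so a positive `sSup` is attained.
lemma Nat.sSup_mem_of_pos {s : Set ℕ} (h : 0 < sSup s) : sSup s ∈ s := by
  have hne : s.Nonempty := Set.nonempty_iff_ne_empty.2 fun hs => by simp [hs] at h
  have hbdd : BddAbove s := by
    by_contra hb
    rw [csSup_of_not_bddAbove hb, csSup_empty] at h
    exact h.false
  exact Nat.sSup_mem hne hbdd

section Truss
variable [Fintype V]

lemma esupp_mono {H H' : SimpleGraph V} (h : H ≤ H') (e : Sym2 V) :
    esupp H e ≤ esupp H' e := by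
  induction e using Sym2.ind with
  | _ u v =>
    exact Nat.card_le_card_of_injective _
      (Subtype.impEmbedding _ _ fun _ hw => ⟨h hw.1, h hw.2⟩).injective

lemma IsTrussSub.of_le {G H : SimpleGraph V} {k k' : ℕ} (hH : IsTrussSub G H k') (hk : k ≤ k') :
    IsTrussSub G H k :=
  ⟨hH.1, fun f hf => (Nat.sub_le_sub_right hk 2).trans (hH.2 f hf)⟩

lemma IsATrussSub.of_le {G H : SimpleGraph V} {A : Set (Sym2 V)} {k k' : ℕ}
    (hH : IsATrussSub G H A k') (hk : k ≤ k') : IsATrussSub G H A k :=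
  ⟨hH.1, fun f hf => (hH.2 f hf).imp_right (Nat.sub_le_sub_right hk 2).trans⟩

lemma le_etruss {G H : SimpleGraph V} {k : ℕ} {e : Sym2 V} (hH : IsTrussSub G H k)
    (he : e ∈ H.edgeSet) : k ≤ etruss G e := by
  refine le_csSup ⟨Fintype.card V + 2, ?_⟩ ⟨H, hH, he⟩
  rintro k' ⟨H', hH', he'⟩
  have := (hH'.2 _ he').trans (esupp_le_card H' _)
  omega

lemma exists_isTrussSub_of_le_etruss {G : SimpleGraph V} {e : Sym2 V} {k : ℕ} (hk₀ : 0 < k)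
    (hk : k ≤ etruss G e) : ∃ H, IsTrussSub G H k ∧ e ∈ H.edgeSet := by
  obtain ⟨H, hH, he⟩ := Nat.sSup_mem_of_pos (hk₀.trans_le hk)
  exact ⟨H, hH.of_le hk, he⟩

lemma exists_isATrussSub_of_le_atruss {G : SimpleGraph V} {A : Set (Sym2 V)} {e : Sym2 V}
    {k : ℕ} (hk₀ : 0 < k) (hk : k ≤ atruss G A e) : ∃ H, IsATrussSub G H A k ∧ e ∈ H.edgeSet := by
  obtain ⟨H, hH, he⟩ := Nat.sSup_mem_of_pos (hk₀.trans_le hk)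
  exact ⟨H, hH.of_le hk, he⟩

lemma IsATrussSub.isTrussSub_sup {G H W : SimpleGraph V} {A : Set (Sym2 V)} {k : ℕ}
    (hH : IsATrussSub G H A k) (hW : IsTrussSub G W k) (hA : A ⊆ W.edgeSet) :
    IsTrussSub G (H ⊔ W) k := by
  refine ⟨sup_le hH.1 hW.1, fun f hf => ?_⟩
  have hW_le : k - 2 ≤ esupp W f → k - 2 ≤ esupp (H ⊔ W) f :=
    (·.trans (esupp_mono le_sup_right f))
  rw [SimpleGraph.edgeSet_sup] at hf
  rcases hf with hfH | hfW
  · rcases hH.2 f hfH with hfA | hsupp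
    · exact hW_le (hW.2 f (hA hfA))
    · exact hsupp.trans (esupp_mono le_sup_left f)
  · exact hW_le (hW.2 f hfW)

end Truss

theorem stmt13_general [Fintype V] (G : SimpleGraph V) (x e : Sym2 V)
    (hf : etruss G e < atruss G {x} e) : etruss G x ≤ etruss G e := by
  by_contra! hlt
  obtain ⟨H, hH, heH⟩ := exists_isATrussSub_of_le_atruss (Nat.succ_pos _) hf
  obtain ⟨W, hW, hxW⟩ := exists_isTrussSub_of_le_etruss (Nat.succ_pos _) hlt
  have hsup := hH.isTrussSub_sup hW (Set.singleton_subset_iff.2 hxW)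
  have := le_etruss hsup (SimpleGraph.edgeSet_mono le_sup_left heH)
  omega

theorem stmt13 [Fintype V] (G : SimpleGraph V) (x e : Sym2 V)
    (hx : x ∈ G.edgeSet) (he : e ∈ G.edgeSet) (hne : e ≠ x)
    (hf : etruss G e < atruss G {x} e) : etruss G x ≤ etruss G e :=
  stmt13_general G x e hf
end
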